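/- Let γ ∈ ℝⁿ, λ ∈ ℝⁿ_{>0}, V' ∈ ℝ^{n×r'}, η ∈ ℝ^{r'}_{>0}, and suppose A' diag(η) V'ᵗ diag(λ) γ = 0 for A' ∈ ℝ^{s×r'}. Define x_i = γ_i/(e^{γ_iλ_i}-1) (x_i = 1 if γ_i = 0), y_i = x_i e^{γ_iλ_i}, and κ = (η ∘ V'ᵗ(λ∘γ)) / (y^{V'} - x^{V'}) (componentwise division, 0/0 := 1, using that each nonzero numerator and denominator entry have the same sign). Then κ has strictly positive entries and A'(κ ∘ (y^{V'} - x^{V'})) = 0. -/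

import Mathlib

/-- The vector of generalised monomials `x^V` given by the columns of `V`. -/
noncomputable def monos {n r : ℕ} (V : Matrix (Fin n) (Fin r) ℝ) (x : Fin n → ℝ) :
    Fin r → ℝ :=
  fun j => ∏ i, x i ^ V i j

/-! Since `y = x ∘ e^{λ∘γ}`, we get `y^{V'} - x^{V'} = x^{V'} ∘ (e^{S} - 1)` with
`S = V'ᵗ(λ∘γ)` and `x^{V'} > 0`, so each entry of the difference vanishes exactly when the
corresponding entry of `S` does and otherwise has its sign. Hence `κ > 0` and
`κ ∘ (y^{V'} - x^{V'}) = η ∘ S`, which `A'` kills by hypothesis. -/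

open Real

theorem div_exp_sub_one_pos {t : ℝ} (ht : t ≠ 0) : 0 < t / (exp t - 1) := by
  rcases ht.lt_or_gt with hneg | hpos
  · exact div_pos_of_neg_of_neg hneg (sub_neg.mpr (exp_lt_one_iff.mpr hneg))
  · exact div_pos hpos (sub_pos.mpr (one_lt_exp_iff.mpr hpos))

theorem div_exp_mul_sub_one_pos {t c : ℝ} (ht : t ≠ 0) (hc : 0 < c) :
    0 < t / (exp (t * c) - 1) := by
  have h := div_pos (div_exp_sub_one_pos (mul_ne_zero ht hc.ne')) hc
  rwa [div_div, mul_div_mul_right _ _ hc.ne'] at h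

theorem mul_exp_sub_one_eq_zero_iff {a t : ℝ} (ha : 0 < a) : a * (exp t - 1) = 0 ↔ t = 0 := by
  rw [mul_eq_zero, sub_eq_zero, exp_eq_one_iff, or_iff_right ha.ne']

theorem monos_pos {n r : ℕ} (V : Matrix (Fin n) (Fin r) ℝ) {x : Fin n → ℝ}
    (hx : ∀ i, 0 < x i) (j : Fin r) : 0 < monos V x j :=
  Finset.prod_pos fun i _ => rpow_pos_of_pos (hx i) _

theorem monos_mul_exp {n r : ℕ} (V : Matrix (Fin n) (Fin r) ℝ) {x : Fin n → ℝ}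
    (hx : ∀ i, 0 ≤ x i) (u : Fin n → ℝ) (j : Fin r) :
    monos V (fun i => x i * exp (u i)) j = monos V x j * exp (∑ i, V i j * u i) := by
  simp only [monos, exp_sum, ← Finset.prod_mul_distrib]
  refine Finset.prod_congr rfl fun i _ => ?_
  rw [mul_rpow (hx i) (exp_pos _).le, ← exp_mul, mul_comm (u i)]

theorem Matrix.mul_diagonal_mul_transpose_mul_diagonal_mulVec {n r s : ℕ}
    (A : Matrix (Fin s) (Fin r) ℝ) (η : Fin r → ℝ) (V : Matrix (Fin n) (Fin r) ℝ)
    (l γ : Fin n → ℝ) :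
    (A * Matrix.diagonal η * V.transpose * Matrix.diagonal l).mulVec γ =
      A.mulVec fun j => η j * ∑ i, V i j * (l i * γ i) := by
  simp only [← Matrix.mulVec_mulVec]
  congr 1
  funext j
  simp [Matrix.mulVec, dotProduct, Matrix.diagonal_apply]

theorem stmt_12 {n s r' : ℕ}
    (A' : Matrix (Fin s) (Fin r') ℝ) (V' : Matrix (Fin n) (Fin r') ℝ)
    (γ : Fin n → ℝ) (l : Fin n → ℝ) (hl : ∀ i, 0 < l i)
    (η : Fin r' → ℝ) (hη : ∀ j, 0 < η j)
    (hker : (A' * Matrix.diagonal η * V'.transpose * Matrix.diagonal l).mulVec γ = 0)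
    (x y : Fin n → ℝ) (κ : Fin r' → ℝ)
    (hx : ∀ i, x i = if γ i = 0 then 1 else γ i / (Real.exp (γ i * l i) - 1))
    (hy : ∀ i, y i = x i * Real.exp (γ i * l i))
    (hκ : ∀ j, κ j = if monos V' y j - monos V' x j = 0 then 1
        else η j * (∑ i, V' i j * (l i * γ i)) / (monos V' y j - monos V' x j)) :
    (∀ j, 0 < κ j) ∧
    A'.mulVec (fun j => κ j * (monos V' y j - monos V' x j)) = 0 := by
  have hx_pos : ∀ i, 0 < x i := fun i => by
    rw [hx i]
    split_ifs with h
    exacts [one_pos, div_exp_mul_sub_one_pos h (hl i)]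
  set S : Fin r' → ℝ := fun j => ∑ i, V' i j * (l i * γ i)
  have hdiff : ∀ j, monos V' y j - monos V' x j = monos V' x j * (exp (S j) - 1) := fun j => by
    have hy' : y = fun i => x i * exp (l i * γ i) := funext fun i => by rw [hy, mul_comm (γ i)]
    rw [hy', monos_mul_exp V' (fun i => (hx_pos i).le), mul_sub_one]
  have hdiff_eq_zero : ∀ j, monos V' y j - monos V' x j = 0 ↔ S j = 0 := fun j => by
    rw [hdiff j, mul_exp_sub_one_eq_zero_iff (monos_pos V' hx_pos j)]
  have hκ_mul : ∀ j, κ j * (monos V' y j - monos V' x j) = η j * S j := fun j => by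
    rw [hκ j]
    split_ifs with h
    · rw [h, (hdiff_eq_zero j).mp h, mul_zero, mul_zero]
    · exact div_mul_cancel₀ _ h
  refine ⟨fun j => ?_, ?_⟩
  · rw [hκ j]
    split_ifs with h
    · exact one_pos
    · have hS : S j ≠ 0 := mt (hdiff_eq_zero j).mpr h
      rw [hdiff j, mul_div_assoc, mul_comm (monos V' x j), ← div_div]
      exact mul_pos (hη j) (div_pos (div_exp_sub_one_pos hS) (monos_pos V' hx_pos j))
  · simp_rw [hκ_mul]
    rwa [Matrix.mul_diagonal_mul_transpose_mul_diagonal_mulVec] at hker
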